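/- arXiv:1303.5106 — 5 statements merged into one kernel-verified Lean document; each statement's English description precedes it below -/
import Mathlib

section
/- Let A be a local ring with involution * whose fixed points lie in the center, with Jacobson radical r, and suppose there exists d ∈ A with d + d* = 1. Let V be a free A-module of finite rank m ≥ 1 with a non-degenerate *-hermitian form h (i.e., the map V → V*, u ↦ h(u,−) is an isomorphism). Then there exists a vector u ∈ V such that h(u,u) is a unit of the fixed ring R. -/
/-!
Pick a basis vector `v` and, by non-degeneracy, a vector `u` with `h(u, v) = 1`. If neither
`h(u, u)` nor `h(v, v)` is a unit, then `h(u + v d, u + v d) = 1 + h(u, u) + d* h(v, v) d`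
since the cross terms add up to `d + d* = 1`; the last two summands are non-units (the
centrality of `h(v, v)` controls the product), so their sum is a non-unit of the local ring
and `u + v d` has unit length.
-/

open MulOpposite

/-- A `*`-hermitian form on a right `A`-module `V` (right modules are encoded as
modules over the opposite ring `Aᵐᵒᵖ`): it is additive and `A`-linear in the second
variable and satisfies `h v u = (h u v)*`. -/
structure HermitianForm (A V : Type*) [Ring A] [StarRing A] [AddCommGroup V]
    [Module Aᵐᵒᵖ V] where
  toFun : V → V → A
  add_right : ∀ u v w : V, toFun u (v + w) = toFun u v + toFun u w
  smul_right : ∀ (a : A) (u v : V), toFun u (op a • v) = toFun u v * a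
  conj_symm : ∀ u v : V, toFun v u = star (toFun u v)

namespace HermitianForm

variable {A V : Type*} [Ring A] [StarRing A] [AddCommGroup V] [Module Aᵐᵒᵖ V]

/-- Non-degeneracy: the map `u ↦ h u -` is a bijection of `V` onto the dual module. -/
def Nondeg (h : HermitianForm A V) : Prop :=
  ∀ φ : V →ₗ[Aᵐᵒᵖ] A, ∃! u : V, ∀ v : V, h.toFun u v = φ v

end HermitianForm

/-- A vector of the free module `V` of rank `m` is primitive if it belongs to a basis. -/
def IsPrimitive (A : Type*) {V : Type*} [Ring A] [AddCommGroup V] [Module Aᵐᵒᵖ V]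
    (m : ℕ) (v : V) : Prop :=
  ∃ (b : Module.Basis (Fin m) Aᵐᵒᵖ V) (i : Fin m), b i = v

lemma isUnit_of_isUnit_mul_mul_of_mem_center {M : Type*} [Monoid M] {x : M}
    (hx : x ∈ Set.center M) {a c : M} (h : IsUnit (a * x * c)) : IsUnit x := by
  have hcomm := (Set.mem_center_iff.mp hx).comm
  rw [← (hcomm a).eq, mul_assoc] at h
  exact ((hcomm (a * c)).isUnit_mul_iff.mp h).1

namespace HermitianForm

section Ring

variable {A V : Type*} [Ring A] [StarRing A] [AddCommGroup V] [Module Aᵐᵒᵖ V]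
  (h : HermitianForm A V)

lemma star_apply_self (u : V) : star (h.toFun u u) = h.toFun u u :=
  (h.conj_symm u u).symm

lemma add_left (u v w : V) : h.toFun (u + v) w = h.toFun u w + h.toFun v w := by
  rw [h.conj_symm, h.add_right, star_add, ← h.conj_symm, ← h.conj_symm]

lemma smul_left (a : A) (u v : V) : h.toFun (op a • u) v = star a * h.toFun u v := by
  rw [h.conj_symm, h.smul_right, star_mul, ← h.conj_symm]

lemma apply_add_smul_self (u v : V) (a : A) :
    h.toFun (u + op a • v) (u + op a • v) =
      h.toFun u u + h.toFun u v * a + star a * h.toFun v u + star a * h.toFun v v * a := by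
  rw [add_left, h.add_right, h.add_right, smul_left, smul_left, h.smul_right, h.smul_right]
  noncomm_ring

lemma Nondeg.exists_apply_basis_eq_one {h : HermitianForm A V} (hnd : h.Nondeg) {ι : Type*}
    (b : Module.Basis ι Aᵐᵒᵖ V) (i : ι) : ∃ u : V, h.toFun u (b i) = 1 := by
  obtain ⟨u, hu, -⟩ := hnd ((opLinearEquiv Aᵐᵒᵖ).symm.toLinearMap ∘ₗ b.coord i)
  exact ⟨u, by simp [hu]⟩

end Ring

lemma exists_isUnit_apply_self_of_apply_eq_one {A V : Type*} [Ring A] [StarRing A]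
    [IsLocalRing A] [AddCommGroup V] [Module Aᵐᵒᵖ V] (h : HermitianForm A V)
    (hcent : ∀ a : A, star a = a → a ∈ Set.center A) {d : A} (hd : d + star d = 1)
    {u v : V} (huv : h.toFun u v = 1) : ∃ w : V, IsUnit (h.toFun w w) := by
  by_cases hu : IsUnit (h.toFun u u)
  · exact ⟨u, hu⟩
  by_cases hv : IsUnit (h.toFun v v)
  · exact ⟨v, hv⟩
  refine ⟨u + op d • v, ?_⟩
  set n := h.toFun u u + star d * h.toFun v v * d with n_eq
  have hn : ¬ IsUnit n := IsLocalRing.nonunits_add hu fun hunit =>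
    hv (isUnit_of_isUnit_mul_mul_of_mem_center (hcent _ (h.star_apply_self v)) hunit)
  have hvu : h.toFun v u = 1 := by rw [h.conj_symm, huv, star_one]
  have hexp : h.toFun (u + op d • v) (u + op d • v) = 1 + n := by
    rw [h.apply_add_smul_self, huv, hvu, one_mul, mul_one, n_eq, ← hd]
    abel
  rw [hexp]
  refine (IsLocalRing.isUnit_or_isUnit_of_add_one (add_neg_cancel_right 1 n)).resolve_right ?_
  rwa [IsUnit.neg_iff]

end HermitianForm

/-- A fixed element is a unit of `R` iff it is a unit of `A`, so a unit of `R` is stated as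
a `*`-fixed unit of `A`. -/
theorem stmt_0 {A V : Type*} [Ring A] [StarRing A] [IsLocalRing A]
    [AddCommGroup V] [Module Aᵐᵒᵖ V]
    (hcent : ∀ a : A, star a = a → a ∈ Set.center A)
    (d : A) (hd : d + star d = 1)
    (m : ℕ) (hm : 1 ≤ m) (b : Module.Basis (Fin m) Aᵐᵒᵖ V)
    (h : HermitianForm A V) (hnd : h.Nondeg) :
    ∃ u : V, star (h.toFun u u) = h.toFun u u ∧ IsUnit (h.toFun u u) := by
  obtain ⟨u, huv⟩ := hnd.exists_apply_basis_eq_one b ⟨0, hm⟩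
  obtain ⟨w, hw⟩ := h.exists_isUnit_apply_self_of_apply_eq_one hcent hd huv
  exact ⟨w, h.star_apply_self w, hw⟩
end

section
/- If V_1 is a free submodule of V such that the restriction of h to V_1 is non-degenerate, then there is a free submodule V_2 of V with V = V_1 ⊥ V_2 (orthogonal direct sum) and the restriction of h to V_2 is non-degenerate. -/
open MulOpposite

/-!
The orthogonal complement `V₁^⊥` is a complement of `V₁`: non-degeneracy on `V₁` represents
`h(v, -)|V₁` by some `q ∈ V₁`, and then `v - q ∈ V₁^⊥`. A functional on `V₁^⊥`, composed with the
projection along `V₁`, is represented on `V` by some `u`, which lies in `V₁^⊥`; hence `h` is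
non-degenerate on `V₁^⊥`. Finally `V₁^⊥` is free since over a local ring a direct summand of a free
module of finite rank is free: one of the two components of the first basis vector has a unit
coordinate, the line it spans splits off from `V` and from the summand containing it, and the
rank drops by one.
-/

open Submodule LinearMap

instance MulOpposite.instIsLocalRing {R : Type*} [Ring R] [IsLocalRing R] : IsLocalRing Rᵐᵒᵖ where
  isUnit_or_isUnit_of_add_one hab :=
    (IsLocalRing.isUnit_or_isUnit_of_add_one (congrArg MulOpposite.unop hab)).imp
      isUnit_unop.mp isUnit_unop.mp

section FreeSummand

variable {R M : Type*} [Ring R] [AddCommGroup M] [Module R M]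

theorem Module.Free.of_injective_of_range_eq {N : Type*} [AddCommGroup N] [Module R N]
    [Module.Free R N] (f : N →ₗ[R] M) (hf : Function.Injective f) {S : Submodule R M}
    (hS : range f = S) : Module.Free R S :=
  .of_equiv ((LinearEquiv.ofInjective f hf).trans (LinearEquiv.ofEq _ _ hS))

theorem Submodule.free_sup_of_disjoint {A B : Submodule R M} [Module.Free R A]
    [Module.Free R B] (h : Disjoint A B) : Module.Free R ↥(A ⊔ B) := by
  refine .of_injective_of_range_eq (A.subtype.coprod B.subtype) ?_ ?_
  · rw [← ker_eq_bot, ker_coprod_of_disjoint_range _ _ (by simpa using h)]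
    simp
  · simp [range_coprod]

theorem Submodule.free_of_free_map {N : Type*} [AddCommGroup N] [Module R N] (f : M →ₗ[R] N)
    {S : Submodule R M} [Module.Free R (S.map f)] (h : Disjoint S (ker f)) :
    Module.Free R S := by
  have hinj : Function.Injective (f ∘ₗ S.subtype) := fun x y hxy => by
    rw [← sub_eq_zero, ← Submodule.coe_eq_zero]
    refine disjoint_def.1 h _ (x - y).2 ?_
    simpa [sub_eq_zero] using hxy
  have hrange : range (f ∘ₗ S.subtype) = S.map f := by rw [range_comp, range_subtype]
  exact .of_equiv ((LinearEquiv.ofInjective _ hinj).trans (LinearEquiv.ofEq _ _ hrange)).symm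

variable {f : M →ₗ[R] R} {p : M}

theorem Submodule.free_span_singleton_of_isUnit (hp : IsUnit (f p)) : Module.Free R (R ∙ p) := by
  refine .of_injective_of_range_eq (toSpanSingleton R M p) (fun a c hac => ?_)
    (range_toSpanSingleton p)
  have := congrArg f hac
  simp only [toSpanSingleton_apply, map_smul, smul_eq_mul] at this
  exact hp.mul_left_inj.1 this

theorem Submodule.isCompl_span_singleton_ker (hp : IsUnit (f p)) : IsCompl (R ∙ p) (ker f) := by
  obtain ⟨u, hu⟩ := hp
  constructor
  · refine disjoint_def.2 fun x hx hxf => ?_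
    obtain ⟨a, rfl⟩ := mem_span_singleton.1 hx
    have : a * f p = 0 := by simpa using hxf
    rw [← hu, Units.mul_left_eq_zero] at this
    rw [this, zero_smul]
  · refine codisjoint_iff.2 (eq_top_iff.2 fun x _ => ?_)
    set a := f x * ↑u⁻¹
    have hmem : x - a • p ∈ ker f := by
      simp [a, ← hu, mul_assoc]
    simpa using add_mem_sup (smul_mem _ a (mem_span_singleton_self p)) hmem

theorem Module.Basis.span_comp_succ_eq_ker_coord {n : ℕ} (b : Module.Basis (Fin (n + 1)) R M) :
    span R (Set.range (b ∘ Fin.succ)) = ker (b.coord 0) := by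
  apply le_antisymm
  · rw [span_le, Set.range_subset_iff]
    intro i
    simp [Module.Basis.coord_apply, Fin.succ_ne_zero]
  · intro x hx
    rw [mem_ker, Module.Basis.coord_apply] at hx
    rw [← b.sum_repr x, Fin.sum_univ_succ, hx, zero_smul, zero_add]
    exact sum_mem fun i _ => smul_mem _ _ (subset_span ⟨i, rfl⟩)

theorem Submodule.isCompl_map_projectionOnto {P Q K L : Submodule R M} (hPQ : IsCompl P Q)
    (hLP : L ≤ P) (hKL : IsCompl K L) :
    IsCompl (P.map (K.projectionOnto L hKL)) (Q.map (K.projectionOnto L hKL)) := by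
  set π := K.projectionOnto L hKL
  constructor
  · refine disjoint_def.2 fun x hxP hxQ => ?_
    obtain ⟨a, ha, rfl⟩ := mem_map.1 hxP
    obtain ⟨q, hq, hqa⟩ := mem_map.1 hxQ
    have hdiff : q - a ∈ P := hLP <| by
      rw [← ker_projectionOnto hKL, mem_ker, map_sub, hqa, sub_self]
    have hqP : q ∈ P := by simpa using add_mem hdiff ha
    rw [← hqa, disjoint_def.1 hPQ.disjoint q hqP hq, map_zero]
  · rw [codisjoint_iff, ← map_sup, hPQ.sup_eq_top, map_top, range_projectionOnto]

theorem Submodule.free_and_free_of_free_map_projectionOnto {P Q K L : Submodule R M}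
    (hPQ : IsCompl P Q) (hLP : L ≤ P) (hKL : IsCompl K L) [Module.Free R L]
    [Module.Free R (P.map (K.projectionOnto L hKL))]
    [Module.Free R (Q.map (K.projectionOnto L hKL))] :
    Module.Free R P ∧ Module.Free R Q := by
  set π := K.projectionOnto L hKL
  have hker : ker π = L := ker_projectionOnto hKL
  have hPsplit : P = L ⊔ K ⊓ P := by
    rw [← sup_inf_assoc_of_le _ hLP, hKL.symm.sup_eq_top, top_inf_eq]
  have hKP : (K ⊓ P).map π = P.map π := by
    conv_rhs => rw [hPsplit]
    rw [Submodule.map_sup, le_ker_iff_map.1 hker.ge, bot_sup_eq]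
  have hKPfree : Module.Free R ↥(K ⊓ P) := by
    have : Module.Free R ((K ⊓ P).map π) := hKP ▸ inferInstance
    exact free_of_free_map π (hker ▸ hKL.disjoint.mono_left inf_le_left)
  refine ⟨?_, free_of_free_map π (hker ▸ (hPQ.disjoint.mono_left hLP).symm)⟩
  rw [hPsplit]
  exact free_sup_of_disjoint (hKL.symm.disjoint.mono_right inf_le_left)

theorem IsLocalRing.free_and_free_of_isCompl [IsLocalRing R] {n : ℕ}
    (b : Module.Basis (Fin n) R M) {P Q : Submodule R M} (hPQ : IsCompl P Q) :
    Module.Free R P ∧ Module.Free R Q := by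
  induction n generalizing M with
  | zero =>
    have : Subsingleton M := b.repr.toEquiv.subsingleton
    exact ⟨.of_subsingleton R P, .of_subsingleton R Q⟩
  | succ n ih =>
    -- `b 0 = p + q` with `p ∈ P`, `q ∈ Q`, and as `R` is local one of them has a unit coordinate.
    wlog hP : ∃ p ∈ P, IsUnit (b.coord 0 p) generalizing P Q with H
    · obtain ⟨p, hp, q, hq, hpq⟩ := mem_sup.1 (hPQ.sup_eq_top ▸ mem_top : b 0 ∈ P ⊔ Q)
      have hsum : b.coord 0 p + b.coord 0 q = 1 := by
        rw [← map_add, hpq, Module.Basis.coord_apply, b.repr_self, Finsupp.single_eq_same]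
      have hqu : IsUnit (b.coord 0 q) :=
        (IsLocalRing.isUnit_or_isUnit_of_add_one hsum).resolve_left fun hu => hP ⟨p, hp, hu⟩
      exact (H hPQ.symm ⟨q, hq, hqu⟩).symm
    obtain ⟨p, hp, hunit⟩ := hP
    have hKL : IsCompl (ker (b.coord 0)) (R ∙ p) := (isCompl_span_singleton_ker hunit).symm
    let bK : Module.Basis (Fin n) R (ker (b.coord 0)) :=
      (Module.Basis.span (b.linearIndependent.comp _ (Fin.succ_injective n))).map
        (LinearEquiv.ofEq _ _ b.span_comp_succ_eq_ker_coord)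
    have hLP : R ∙ p ≤ P := (span_singleton_le_iff_mem _ _).2 hp
    have := free_span_singleton_of_isUnit hunit
    obtain ⟨hP', hQ'⟩ := ih bK (isCompl_map_projectionOnto hPQ hLP hKL)
    exact free_and_free_of_free_map_projectionOnto hPQ hLP hKL

end FreeSummand

namespace HermitianForm

variable {A V : Type*} [Ring A] [StarRing A] [AddCommGroup V] [Module Aᵐᵒᵖ V]
  (h : HermitianForm A V)

def toLin (u : V) : V →ₗ[Aᵐᵒᵖ] A where
  toFun := h.toFun u
  map_add' := h.add_right u
  map_smul' c v := by simpa [smul_eq_mul_unop] using h.smul_right (unop c) u v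

theorem toLin_apply (u v : V) : h.toLin u v = h.toFun u v := rfl

theorem toFun_eq_zero_comm {u v : V} : h.toFun u v = 0 ↔ h.toFun v u = 0 := by
  rw [h.conj_symm u v, star_eq_zero]

def restrict (W : Submodule Aᵐᵒᵖ V) : HermitianForm A W where
  toFun u v := h.toFun u v
  add_right u v w := h.add_right u v w
  smul_right a u v := h.smul_right a u v
  conj_symm u v := h.conj_symm u v

def orthogonal (W : Submodule Aᵐᵒᵖ V) : Submodule Aᵐᵒᵖ V :=
  ⨅ u ∈ W, ker (h.toLin u)

variable {h} {W : Submodule Aᵐᵒᵖ V}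

theorem mem_orthogonal {v : V} : v ∈ h.orthogonal W ↔ ∀ u ∈ W, h.toFun u v = 0 := by
  simp [orthogonal, toLin_apply]

theorem isCompl_orthogonal (hW : (h.restrict W).Nondeg) : IsCompl W (h.orthogonal W) := by
  constructor
  · refine disjoint_def.2 fun x hxW hx => ?_
    have hx0 : ∀ v : W, (h.restrict W).toFun ⟨x, hxW⟩ v = (0 : W →ₗ[Aᵐᵒᵖ] A) v :=
      fun v => h.toFun_eq_zero_comm.2 (mem_orthogonal.1 hx v v.2)
    have h00 : ∀ v : W, (h.restrict W).toFun 0 v = (0 : W →ₗ[Aᵐᵒᵖ] A) v :=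
      fun v => h.toFun_eq_zero_comm.2 (map_zero (h.toLin v))
    simpa using (hW 0).unique hx0 h00
  · refine codisjoint_iff.2 (eq_top_iff.2 fun v _ => ?_)
    obtain ⟨q, hq, -⟩ := hW ((h.toLin v).domRestrict W)
    have hvq : v - q ∈ h.orthogonal W := mem_orthogonal.2 fun u hu => by
      have hqu : h.toFun q u = h.toFun v u := hq ⟨u, hu⟩
      rw [← toLin_apply, map_sub, toLin_apply, toLin_apply, h.conj_symm v, h.conj_symm q, hqu,
        sub_self]
    simpa using add_mem_sup q.2 hvq

theorem nondeg_restrict_orthogonal (hnd : h.Nondeg) (hW : IsCompl W (h.orthogonal W)) :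
    (h.restrict (h.orthogonal W)).Nondeg := by
  set U := h.orthogonal W
  set π := U.projectionOnto W hW.symm
  have hpair : ∀ (y : U) (v : V), h.toFun y v = h.toFun y (π v) := fun y v => by
    have hvW : v - π v ∈ W := sub_projection_mem hW.symm v
    calc h.toFun y v = h.toFun y (v - π v + π v) := by rw [sub_add_cancel]
      _ = h.toFun y (π v) := by
        rw [h.add_right, h.toFun_eq_zero_comm.2 (mem_orthogonal.1 y.2 _ hvW), zero_add]
  intro φ
  obtain ⟨u, hu, huniq⟩ := hnd (φ ∘ₗ π)
  have huU : u ∈ U := mem_orthogonal.2 fun w hw => by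
    rw [h.toFun_eq_zero_comm, hu, comp_apply, (projectionOnto_apply_eq_zero_iff _).2 hw, map_zero]
  refine ⟨⟨u, huU⟩, fun v => ?_, fun y hy => Subtype.ext (huniq y fun v => ?_)⟩
  · change h.toFun u v = φ v
    rw [hu, comp_apply, projectionOnto_apply_left]
  · rw [hpair, comp_apply]
    exact hy (π v)

end HermitianForm

theorem stmt_3_general {A V : Type*} [Ring A] [StarRing A] [IsLocalRing A]
    [AddCommGroup V] [Module Aᵐᵒᵖ V]
    (m : ℕ) (b : Module.Basis (Fin m) Aᵐᵒᵖ V)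
    (h : HermitianForm A V) (hnd : h.Nondeg)
    (V₁ : Submodule Aᵐᵒᵖ V)
    (hnd1 : ∀ φ : V₁ →ₗ[Aᵐᵒᵖ] A, ∃! u : V₁, ∀ v : V₁, h.toFun u v = φ v) :
    ∃ V₂ : Submodule Aᵐᵒᵖ V, Module.Free Aᵐᵒᵖ V₂ ∧
      V₁ ⊔ V₂ = ⊤ ∧ V₁ ⊓ V₂ = ⊥ ∧
      (∀ u ∈ V₁, ∀ v ∈ V₂, h.toFun u v = 0) ∧
      (∀ φ : V₂ →ₗ[Aᵐᵒᵖ] A, ∃! u : V₂, ∀ v : V₂, h.toFun u v = φ v) := by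
  have hc : IsCompl V₁ (h.orthogonal V₁) := HermitianForm.isCompl_orthogonal hnd1
  exact ⟨h.orthogonal V₁, (IsLocalRing.free_and_free_of_isCompl b hc).2, hc.sup_eq_top,
    hc.inf_eq_bot, fun u hu v hv => HermitianForm.mem_orthogonal.1 hv u hu,
    HermitianForm.nondeg_restrict_orthogonal hnd hc⟩

/-- Lemma 2.3(b): if the restriction of `h` to a free submodule `V₁` is
non-degenerate, then `V = V₁ ⊥ V₂` for some free submodule `V₂` on which the
restriction of `h` is again non-degenerate. -/
theorem stmt_3 {A V : Type*} [Ring A] [StarRing A] [IsLocalRing A]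
    [AddCommGroup V] [Module Aᵐᵒᵖ V]
    (hcent : ∀ a : A, star a = a → a ∈ Set.center A)
    (d : A) (hd : d + star d = 1)
    (m : ℕ) (hm : 1 ≤ m) (b : Module.Basis (Fin m) Aᵐᵒᵖ V)
    (h : HermitianForm A V) (hnd : h.Nondeg)
    (V₁ : Submodule Aᵐᵒᵖ V) [Module.Free Aᵐᵒᵖ V₁]
    (hnd1 : ∀ φ : V₁ →ₗ[Aᵐᵒᵖ] A, ∃! u : V₁, ∀ v : V₁, h.toFun u v = φ v) :
    ∃ V₂ : Submodule Aᵐᵒᵖ V, Module.Free Aᵐᵒᵖ V₂ ∧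
      V₁ ⊔ V₂ = ⊤ ∧ V₁ ⊓ V₂ = ⊥ ∧
      (∀ u ∈ V₁, ∀ v ∈ V₂, h.toFun u v = 0) ∧
      (∀ φ : V₂ →ₗ[Aᵐᵒᵖ] A, ∃! u : V₂, ∀ v : V₂, h.toFun u v = φ v) :=
  stmt_3_general m b h hnd V₁ hnd1
end

section
/- Suppose additionally that the squaring map on 1 + m (the 1-units of R) is surjective and R/m is a finite field of odd order q. If the involution induced by * on the division ring A/r is the identity, then the norm map Q : A* → R*, a ↦ aa*, is not surjective and A/r ≅ F_q; if the induced involution is not the identity, then A/r is commutative, Q is surjective, and A/r ≅ F_{q^2}. -/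
open MulOpposite

/-!
Split `a = r + t` with `r ∈ R` and `t` skew, using that `2` is invertible. If every skew element
lies in the ideal `𝔯` of nonunits of `A`, then `A = R + 𝔯` and `a a* ≡ r² mod 𝔯`, so a nonsquare
unit of `R` is not a norm. Otherwise fix a skew unit `t`. For skew `v`, subtracting a suitable
multiple of `t` leaves a skew `w` anticommuting with `t`, and `w ∈ 𝔯`: else `u = βt + γw` is skew
with `u² = β²t² + γ²w² ∈ R`, and as binary forms over `F_q` represent `1` we may take `u² ≡ 1`;
but `1 + u` and `1 - u = (1 + u)*` are units or nonunits together and add up to `2`, so `1 - u²`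
must be a unit. Hence `A = R + Rt + 𝔯`, which is commutative modulo `𝔯`, the norms `α² - β²t²`
reach every residue class of units, and surjectivity of squaring on `1 + 𝔪` makes them exact.
-/

section DedekindFinite

variable {M : Type*} [Monoid M] [IsDedekindFiniteMonoid M] {a b : M}

theorem mul_mem_nonunits_left' (ha : a ∈ nonunits M) : a * b ∈ nonunits M :=
  mt isUnit_of_mul_isUnit_left ha

theorem mul_mem_nonunits_right' (hb : b ∈ nonunits M) : a * b ∈ nonunits M :=
  mt isUnit_of_mul_isUnit_right hb

end DedekindFinite

namespace IsLocalRing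

variable {A : Type*} [Ring A] [IsLocalRing A]

instance : IsDedekindFiniteMonoid A where
  mul_eq_one_symm {a b} hab := by
    have hidem : IsIdempotentElem (b * a) := by
      rw [IsIdempotentElem, mul_assoc, ← mul_assoc a, hab, one_mul]
    rcases isUnit_or_isUnit_of_add_one (add_sub_cancel (b * a) 1) with h | h
    · exact (IsIdempotentElem.iff_eq_one_of_isUnit h).mp hidem
    · have hb : b = 0 := h.mul_left_cancel <| by
        rw [mul_zero, sub_mul, one_mul, mul_assoc, hab, mul_one, sub_self]
      simp [hb] at hab

theorem sub_mem_nonunits {a b : A} (ha : a ∈ nonunits A) (hb : b ∈ nonunits A) :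
    a - b ∈ nonunits A := by
  rw [sub_eq_add_neg]
  exact nonunits_add ha (mt (IsUnit.neg_iff b).mp hb)

theorem mul_sub_mul_mem_nonunits_of_commute {a b x y : A} (ha : a - x ∈ nonunits A)
    (hb : b - y ∈ nonunits A) (hxy : Commute x y) : a * b - b * a ∈ nonunits A := by
  have h : a * b - b * a
      = ((a - x) * b + x * (b - y)) - ((b - y) * a + y * (a - x)) + (x * y - y * x) := by
    noncomm_ring
  rw [h, hxy.eq, sub_self, add_zero]
  exact sub_mem_nonunits (nonunits_add (mul_mem_nonunits_left' ha) (mul_mem_nonunits_right' hb))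
    (nonunits_add (mul_mem_nonunits_left' hb) (mul_mem_nonunits_right' ha))

end IsLocalRing

namespace FiniteField

variable {K : Type*} [Field K] [Fintype K]

theorem exists_mul_sq_add_mul_sq_eq (hK : Fintype.card K % 2 = 1) {a b : K} (ha : a ≠ 0)
    (hb : b ≠ 0) (c : K) : ∃ x y : K, a * x ^ 2 + b * y ^ 2 = c := by
  open Polynomial in
  obtain ⟨x, y, h⟩ := exists_root_sum_quadratic (f := C a * X ^ 2) (g := C b * X ^ 2 - C c)
    (degree_C_mul_X_pow 2 ha) (by compute_degree!) hK
  refine ⟨x, y, ?_⟩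
  simp only [eval_mul, eval_C, eval_pow, eval_X, eval_sub] at h
  linear_combination h

end FiniteField

namespace IsLocalRing

variable {R : Type*} [CommRing R] [IsLocalRing R]

theorem exists_sq_mul_eq_of_sub_mem_maximalIdeal
    (hsq : ∀ x ∈ maximalIdeal R, ∃ y ∈ maximalIdeal R, (1 + y) ^ 2 = 1 + x)
    {N r : R} (hr : IsUnit r) (h : N - r ∈ maximalIdeal R) : ∃ z : R, z ^ 2 * N = r := by
  obtain ⟨u, rfl⟩ := hr
  obtain ⟨y, hy, hy2⟩ := hsq ((N - u) * ↑u⁻¹) (Ideal.mul_mem_right _ _ h)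
  obtain ⟨v, hv⟩ : IsUnit (1 + y) := by
    simpa using isUnit_one_sub_self_of_mem_nonunits (-y) (by simpa using hy)
  -- `(1 + y) ^ 2 = N / r`, so `z = (1 + y)⁻¹` works
  have hinv : (↑v⁻¹ : R) * (1 + y) = 1 := by rw [← hv, Units.inv_mul]
  refine ⟨↑v⁻¹, ?_⟩
  linear_combination (-(↑v⁻¹ : R) ^ 2) * (↑u * hy2 + (N - u) * u.inv_mul) +
    ↑u * ((↑v⁻¹ : R) * (1 + y) + 1) * hinv

variable [Finite (ResidueField R)] (hodd : Odd (Nat.card (ResidueField R)))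
include hodd

theorem ringChar_residueField_ne_two : ringChar (ResidueField R) ≠ 2 := by
  have := Fintype.ofFinite (ResidueField R)
  rw [Ne, FiniteField.even_card_iff_char_two, ← Nat.card_eq_fintype_card, ← Nat.even_iff,
    Nat.not_even_iff_odd]
  exact hodd

theorem exists_mul_sq_add_mul_sq_sub_mem_maximalIdeal {a b : R} (ha : IsUnit a) (hb : IsUnit b)
    (c : R) : ∃ x y : R, a * x ^ 2 + b * y ^ 2 - c ∈ maximalIdeal R := by
  have := Fintype.ofFinite (ResidueField R)
  obtain ⟨x, y, hxy⟩ := FiniteField.exists_mul_sq_add_mul_sq_eq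
    (by rwa [← Nat.card_eq_fintype_card, ← Nat.odd_iff]) ((residue_ne_zero_iff_isUnit a).mpr ha)
    ((residue_ne_zero_iff_isUnit b).mpr hb) (residue R c)
  obtain ⟨x, rfl⟩ := residue_surjective x
  obtain ⟨y, rfl⟩ := residue_surjective y
  refine ⟨x, y, ?_⟩
  rw [← residue_eq_zero_iff]
  simp [hxy]

theorem exists_isUnit_not_isSquare_residue : ∃ r : R, IsUnit r ∧ ¬IsSquare (residue R r) := by
  have := Fintype.ofFinite (ResidueField R)
  obtain ⟨x, hx⟩ := FiniteField.exists_nonsquare (ringChar_residueField_ne_two hodd)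
  obtain ⟨r, rfl⟩ := residue_surjective x
  exact ⟨r, (residue_ne_zero_iff_isUnit r).mp fun h => hx (h ▸ .zero), hx⟩

end IsLocalRing

theorem commute_algebraMap_add_algebraMap_mul {A R : Type*} [Ring A] [CommRing R] [Algebra R A]
    (t : A) (r s r' s' : R) :
    Commute (algebraMap R A r + algebraMap R A s * t) (algebraMap R A r' + algebraMap R A s' * t) :=
  have hct (x : R) : Commute (algebraMap R A x * t) t :=
    (Algebra.commute_algebraMap_left x t).mul_left (Commute.refl t)
  (Algebra.commute_algebraMap_left _ _).add_left
    ((Algebra.commute_algebraMap_right _ _).add_right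
      ((Algebra.commute_algebraMap_right _ _).mul_right (hct s)))

section Involution

variable {A R : Type*} [Ring A] [StarRing A] [CommRing R] [Algebra R A]

theorem star_algebraMap_of_fix (hfix : ∀ a : A, star a = a ↔ a ∈ Set.range (algebraMap R A))
    (r : R) : star (algebraMap R A r) = algebraMap R A r :=
  (hfix _).mpr ⟨r, rfl⟩

theorem isLocalHom_algebraMap_of_fix
    (hfix : ∀ a : A, star a = a ↔ a ∈ Set.range (algebraMap R A))
    (hinj : Function.Injective (algebraMap R A)) : IsLocalHom (algebraMap R A) where
  map_nonunit r hr := by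
    obtain ⟨b, hb⟩ := hr.exists_right_inv
    have hb' : star b * algebraMap R A r = 1 := by
      rw [← star_algebraMap_of_fix hfix, ← star_mul, hb, star_one]
    have hsb : star b = b := by
      rw [← mul_one (star b), ← hb, ← mul_assoc, hb', one_mul]
    obtain ⟨s, rfl⟩ := (hfix b).mp hsb
    exact .of_mul_eq_one s (hinj (by rw [map_mul, hb, map_one]))

theorem algebraMap_mul_mem_skewAdjoint
    (hfix : ∀ a : A, star a = a ↔ a ∈ Set.range (algebraMap R A)) (r : R) {t : A}
    (ht : t ∈ skewAdjoint A) : algebraMap R A r * t ∈ skewAdjoint A := by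
  rw [skewAdjoint.mem_iff] at ht ⊢
  rw [star_mul, ht, star_algebraMap_of_fix hfix, neg_mul, Algebra.commutes]

theorem exists_algebraMap_eq_mul_add_mul
    (hfix : ∀ a : A, star a = a ↔ a ∈ Set.range (algebraMap R A)) {t w : A}
    (ht : t ∈ skewAdjoint A) (hw : w ∈ skewAdjoint A) :
    ∃ c : R, algebraMap R A c = t * w + w * t := by
  rw [skewAdjoint.mem_iff] at ht hw
  refine (hfix _).mp ?_
  rw [star_add, star_mul, star_mul, ht, hw, neg_mul_neg, neg_mul_neg, add_comm]

theorem exists_algebraMap_eq_mul_self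
    (hfix : ∀ a : A, star a = a ↔ a ∈ Set.range (algebraMap R A)) {t : A}
    (ht : t ∈ skewAdjoint A) : ∃ d : R, algebraMap R A d = t * t := by
  rw [skewAdjoint.mem_iff] at ht
  exact (hfix _).mp (by rw [star_mul, ht, neg_mul_neg])

theorem exists_sub_algebraMap_mem_skewAdjoint
    (hfix : ∀ a : A, star a = a ↔ a ∈ Set.range (algebraMap R A)) (h2 : IsUnit (2 : R))
    (a : A) : ∃ r : R, a - algebraMap R A r ∈ skewAdjoint A := by
  obtain ⟨c, hc⟩ := (hfix (a + star a)).mp (by rw [star_add, star_star, add_comm])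
  obtain ⟨h, hh⟩ := h2.exists_right_inv
  refine ⟨h * c, ?_⟩
  have hsum : algebraMap R A (h * c) + algebraMap R A (h * c) = a + star a := by
    rw [← map_add, ← two_mul, ← mul_assoc, hh, one_mul, hc]
  rw [skewAdjoint.mem_iff, star_sub, star_algebraMap_of_fix hfix, neg_sub,
    sub_eq_sub_iff_add_eq_add, hsum, add_comm]

theorem algebraMap_add_mul_star (hfix : ∀ a : A, star a = a ↔ a ∈ Set.range (algebraMap R A))
    (r : R) {t : A} (ht : t ∈ skewAdjoint A) :
    (algebraMap R A r + t) * star (algebraMap R A r + t) = algebraMap R A (r ^ 2) - t * t := by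
  rw [skewAdjoint.mem_iff] at ht
  rw [star_add, star_algebraMap_of_fix hfix, ht, map_pow, sq]
  simp only [add_mul, mul_add, mul_neg, ← Algebra.commutes r t]
  abel

end Involution

theorem mem_nonunits_of_mem_skewAdjoint {A : Type*} [Ring A] [StarRing A] (h2 : IsUnit (2 : A))
    (hid : ∀ a : A, a - star a ∈ nonunits A) {t : A} (ht : t ∈ skewAdjoint A) :
    t ∈ nonunits A := fun htu =>
  hid t (by rw [skewAdjoint.mem_iff.mp ht, sub_neg_eq_add, ← two_mul]; exact h2.mul htu)

section LocalInvolution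

variable {A : Type*} [Ring A] [StarRing A] [IsLocalRing A]

theorem sub_star_mem_nonunits {x : A} (hx : x ∈ nonunits A) : x - star x ∈ nonunits A :=
  IsLocalRing.sub_mem_nonunits hx (mt isUnit_star.mp hx)

theorem add_star_mem_nonunits {x : A} (hx : x * star x ∈ nonunits A) :
    x + star x ∈ nonunits A := by
  have hx' : x ∈ nonunits A := fun h => hx (h.mul (isUnit_star.mpr h))
  exact IsLocalRing.nonunits_add hx' (mt isUnit_star.mp hx')

variable (h2 : IsUnit (2 : A))
include h2

theorem isUnit_one_sub_mul_self_of_mem_skewAdjoint {u : A} (hu : u ∈ skewAdjoint A) :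
    IsUnit (1 - u * u) := by
  have hstar : star (1 + u) = 1 - u := by
    rw [star_add, star_one, skewAdjoint.mem_iff.mp hu, sub_eq_add_neg]
  have hprod : (1 + u) * (1 - u) = 1 - u * u := by noncomm_ring
  by_contra h
  refine add_star_mem_nonunits (x := 1 + u) ?_ ?_
  · rwa [hstar, hprod]
  · rwa [hstar, add_add_sub_cancel, one_add_one_eq_two]

end LocalInvolution

theorem isUnit_sub_algebraMap_of_mem_skewAdjoint {A R : Type*} [Ring A] [StarRing A]
    [IsLocalRing A] [CommRing R] [Algebra R A]
    (hfix : ∀ a : A, star a = a ↔ a ∈ Set.range (algebraMap R A)) (h2 : IsUnit (2 : A)) {v : A}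
    (hv : v ∈ skewAdjoint A) (hvu : IsUnit v) (r : R) : IsUnit (v - algebraMap R A r) := by
  by_contra h
  have h' := sub_star_mem_nonunits h
  rw [star_sub, skewAdjoint.mem_iff.mp hv, star_algebraMap_of_fix hfix, sub_sub_sub_cancel_right,
    sub_neg_eq_add, ← two_mul] at h'
  exact h' (h2.mul hvu)

section SymmetricElements

variable {A R : Type*} [Ring A] [StarRing A] [IsLocalRing A] [CommRing R] [IsLocalRing R]
  [Algebra R A] [IsLocalHom (algebraMap R A)]
  (hfix : ∀ a : A, star a = a ↔ a ∈ Set.range (algebraMap R A))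
include hfix

theorem isSquare_residue_of_mul_star_eq (h2 : IsUnit (2 : R))
    (hskew : (skewAdjoint A : Set A) ⊆ nonunits A) {a : A} {r : R}
    (ha : a * star a = algebraMap R A r) : IsSquare (IsLocalRing.residue R r) := by
  obtain ⟨s, hs⟩ := exists_sub_algebraMap_mem_skewAdjoint hfix h2 a
  obtain ⟨e, he⟩ := exists_algebraMap_eq_mul_self hfix hs
  have hem : e ∈ IsLocalRing.maximalIdeal R := by
    rw [IsLocalRing.mem_maximalIdeal, ← map_mem_nonunits_iff (algebraMap R A), he]
    exact mul_mem_nonunits_left' (hskew hs)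
  have hnorm := algebraMap_add_mul_star hfix s hs
  rw [add_sub_cancel, ha, ← he, ← map_sub, ← sub_eq_zero, ← map_sub] at hnorm
  have hker : r - (s ^ 2 - e) ∈ IsLocalRing.maximalIdeal R := by
    rw [IsLocalRing.mem_maximalIdeal, ← map_mem_nonunits_iff (algebraMap R A), hnorm]
    exact zero_mem_nonunits.mpr zero_ne_one
  refine ⟨IsLocalRing.residue R s, ?_⟩
  rw [← map_mul, ← sq, ← sub_eq_zero, ← map_sub, IsLocalRing.residue_eq_zero_iff]
  convert Ideal.sub_mem _ hker hem using 1
  ring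

variable [Finite (IsLocalRing.ResidueField R)] (hodd : Odd (Nat.card (IsLocalRing.ResidueField R)))
include hodd

theorem exists_isUnit_mul_star_eq_algebraMap
    (hsq : ∀ x ∈ IsLocalRing.maximalIdeal R,
      ∃ y ∈ IsLocalRing.maximalIdeal R, (1 + y) ^ 2 = 1 + x)
    {t : A} (ht : t ∈ skewAdjoint A) (htu : IsUnit t) {r : R} (hr : IsUnit r) :
    ∃ a : A, IsUnit a ∧ a * star a = algebraMap R A r := by
  obtain ⟨d, hd⟩ := exists_algebraMap_eq_mul_self hfix ht
  have hdu : IsUnit d := IsUnit.of_map (algebraMap R A) d (hd ▸ htu.mul htu)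
  obtain ⟨α, β, hαβ⟩ :=
    IsLocalRing.exists_mul_sq_add_mul_sq_sub_mem_maximalIdeal hodd isUnit_one hdu.neg r
  obtain ⟨z, hz⟩ := IsLocalRing.exists_sq_mul_eq_of_sub_mem_maximalIdeal hsq hr hαβ
  have ha : (algebraMap R A (z * α) + algebraMap R A (z * β) * t) *
      star (algebraMap R A (z * α) + algebraMap R A (z * β) * t) = algebraMap R A r := by
    rw [algebraMap_add_mul_star hfix _ (algebraMap_mul_mem_skewAdjoint hfix _ ht), ← hz,
      (Algebra.commute_algebraMap_right (z * β) t).mul_mul_mul_comm, ← hd, ← map_mul, ← map_mul,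
      ← map_sub]
    congr 1
    ring
  exact ⟨_, isUnit_of_mul_isUnit_left (ha ▸ hr.map (algebraMap R A)), ha⟩

variable (h2 : IsUnit (2 : A))
include h2

theorem not_isUnit_of_mul_add_mul_eq_zero {t w : A} (ht : t ∈ skewAdjoint A)
    (hw : w ∈ skewAdjoint A) (htu : IsUnit t) (hanti : t * w + w * t = 0) : ¬IsUnit w := by
  intro hwu
  obtain ⟨d, hd⟩ := exists_algebraMap_eq_mul_self hfix ht
  obtain ⟨e, he⟩ := exists_algebraMap_eq_mul_self hfix hw
  have hdu : IsUnit d := IsUnit.of_map (algebraMap R A) d (hd ▸ htu.mul htu)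
  have heu : IsUnit e := IsUnit.of_map (algebraMap R A) e (he ▸ hwu.mul hwu)
  obtain ⟨β, γ, hβγ⟩ :=
    IsLocalRing.exists_mul_sq_add_mul_sq_sub_mem_maximalIdeal hodd hdu heu 1
  have hu : algebraMap R A β * t + algebraMap R A γ * w ∈ skewAdjoint A :=
    add_mem (algebraMap_mul_mem_skewAdjoint hfix β ht) (algebraMap_mul_mem_skewAdjoint hfix γ hw)
  have huu : (algebraMap R A β * t + algebraMap R A γ * w) *
      (algebraMap R A β * t + algebraMap R A γ * w) = algebraMap R A (d * β ^ 2 + e * γ ^ 2) := by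
    rw [Algebra.algebraMap_eq_smul_one] at hd he
    rw [Algebra.algebraMap_eq_smul_one (d * β ^ 2 + e * γ ^ 2)]
    simp only [← Algebra.smul_def, add_mul, mul_add, smul_mul_smul_comm]
    linear_combination (norm := module) (β * γ) • hanti - (β ^ 2) • hd - (γ ^ 2) • he
  have h1 := isUnit_one_sub_mul_self_of_mem_skewAdjoint h2 hu
  rw [huu, ← map_one (algebraMap R A), ← map_sub] at h1
  have hm : 1 - (d * β ^ 2 + e * γ ^ 2) ∈ IsLocalRing.maximalIdeal R := by
    rw [← neg_sub]
    exact neg_mem hβγ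
  exact hm (h1.of_map (algebraMap R A) _)

theorem exists_sub_algebraMap_mul_mem_nonunits {t v : A} (ht : t ∈ skewAdjoint A)
    (htu : IsUnit t) (hv : v ∈ skewAdjoint A) :
    ∃ s : R, v - algebraMap R A s * t ∈ nonunits A := by
  obtain ⟨d, hd⟩ := exists_algebraMap_eq_mul_self hfix ht
  obtain ⟨c, hc⟩ := exists_algebraMap_eq_mul_add_mul hfix ht hv
  have hdu : IsUnit d := IsUnit.of_map (algebraMap R A) d (hd ▸ htu.mul htu)
  have h2R : IsUnit (2 : R) := IsUnit.of_map (algebraMap R A) 2 (by rwa [map_ofNat])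
  obtain ⟨k, hk⟩ := (h2R.mul hdu).exists_right_inv
  refine ⟨c * k, not_isUnit_of_mul_add_mul_eq_zero hfix hodd h2 ht
    (sub_mem hv (algebraMap_mul_mem_skewAdjoint hfix _ ht)) htu ?_⟩
  rw [Algebra.algebraMap_eq_smul_one] at hd hc
  simp only [← Algebra.smul_def, mul_sub, sub_mul, mul_smul_comm, smul_mul_assoc]
  linear_combination (norm := module) -hc + (2 * c * k) • hd - hk • (c • (1 : A))

theorem exists_sub_algebraMap_add_algebraMap_mul_mem_nonunits {t : A} (ht : t ∈ skewAdjoint A)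
    (htu : IsUnit t) (a : A) :
    ∃ r s : R, a - (algebraMap R A r + algebraMap R A s * t) ∈ nonunits A := by
  have h2R : IsUnit (2 : R) := IsUnit.of_map (algebraMap R A) 2 (by rwa [map_ofNat])
  obtain ⟨r, hr⟩ := exists_sub_algebraMap_mem_skewAdjoint hfix h2R a
  obtain ⟨s, hs⟩ := exists_sub_algebraMap_mul_mem_nonunits hfix hodd h2 ht htu hr
  exact ⟨r, s, by rwa [← sub_sub]⟩

end SymmetricElements

theorem stmt_6_general {A : Type*} [Ring A] [StarRing A] [IsLocalRing A]
    (h2 : IsUnit (2 : A))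
    (R : Type*) [CommRing R] [IsLocalRing R] [Algebra R A]
    (hinj : Function.Injective (algebraMap R A))
    (hfix : ∀ a : A, star a = a ↔ a ∈ Set.range (algebraMap R A))
    [Finite (IsLocalRing.ResidueField R)]
    (hodd : Odd (Nat.card (IsLocalRing.ResidueField R)))
    (hsq : ∀ x ∈ IsLocalRing.maximalIdeal R,
      ∃ y ∈ IsLocalRing.maximalIdeal R, (1 + y) ^ 2 = 1 + x) :
    ((∀ a : A, a - star a ∈ nonunits A) →
      (¬ ∀ r : R, IsUnit r → ∃ a : A, IsUnit a ∧ a * star a = algebraMap R A r) ∧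
      (∀ a : A, ∃ r : R, a - algebraMap R A r ∈ nonunits A)) ∧
    ((¬ ∀ a : A, a - star a ∈ nonunits A) →
      (∀ a b : A, a * b - b * a ∈ nonunits A) ∧
      (∀ r : R, IsUnit r → ∃ a : A, IsUnit a ∧ a * star a = algebraMap R A r) ∧
      (∃ θ : A, (¬ ∃ r : R, θ - algebraMap R A r ∈ nonunits A) ∧
        ∀ a : A, ∃ r s : R,
          a - (algebraMap R A r + algebraMap R A s * θ) ∈ nonunits A)) := by
  have := isLocalHom_algebraMap_of_fix hfix hinj
  have h2R : IsUnit (2 : R) := IsUnit.of_map (algebraMap R A) 2 (by rwa [map_ofNat])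
  refine ⟨fun hid => ?_, fun hnid => ?_⟩
  · have hskew : (skewAdjoint A : Set A) ⊆ nonunits A := fun t =>
      mem_nonunits_of_mem_skewAdjoint h2 hid
    refine ⟨fun hsurj => ?_, fun a => ?_⟩
    · obtain ⟨r, hr, hnsq⟩ := IsLocalRing.exists_isUnit_not_isSquare_residue hodd
      obtain ⟨a, -, ha⟩ := hsurj r hr
      exact hnsq (isSquare_residue_of_mul_star_eq hfix h2R hskew ha)
    · obtain ⟨r, hr⟩ := exists_sub_algebraMap_mem_skewAdjoint hfix h2R a
      exact ⟨r, hskew hr⟩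
  · obtain ⟨a₀, ha₀⟩ := not_forall.mp hnid
    have ht : a₀ - star a₀ ∈ skewAdjoint A := by
      rw [skewAdjoint.mem_iff, star_sub, star_star, neg_sub]
    have htu : IsUnit (a₀ - star a₀) := not_not.mp ha₀
    have hrep := exists_sub_algebraMap_add_algebraMap_mul_mem_nonunits hfix hodd h2 ht htu
    refine ⟨fun a b => ?_, fun r hr => exists_isUnit_mul_star_eq_algebraMap hfix hodd hsq ht htu hr,
      a₀ - star a₀, fun ⟨r, hr⟩ => hr (isUnit_sub_algebraMap_of_mem_skewAdjoint hfix h2 ht htu r),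
      hrep⟩
    obtain ⟨r, s, ha⟩ := hrep a
    obtain ⟨r', s', hb⟩ := hrep b
    exact IsLocalRing.mul_sub_mul_mem_nonunits_of_commute ha hb
      (commute_algebraMap_add_algebraMap_mul _ r s r' s')

/-- Proposition 3.2 (Prop. 45): with `R` the (central) fixed ring of the involution,
residue field `F_q` of odd order and squaring surjective on `1 + 𝔪`:
if the induced involution on `A/𝔯` is the identity then the norm map
`Q : A* → R*`, `a ↦ a a*`, is not surjective and `A/𝔯 ≅ F_q` (i.e. `A = R + 𝔯`);
otherwise `A/𝔯` is commutative, `Q` is surjective and `A/𝔯 ≅ F_{q²}`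
(a quadratic extension of the residue field of `R`). -/
theorem stmt_6 {A : Type*} [Ring A] [StarRing A] [IsLocalRing A]
    (hcent : ∀ a : A, star a = a → a ∈ Set.center A)
    (h2 : IsUnit (2 : A))
    (R : Type*) [CommRing R] [IsLocalRing R] [Algebra R A]
    (hinj : Function.Injective (algebraMap R A))
    (hfix : ∀ a : A, star a = a ↔ a ∈ Set.range (algebraMap R A))
    [Finite (IsLocalRing.ResidueField R)]
    (hodd : Odd (Nat.card (IsLocalRing.ResidueField R)))
    (hsq : ∀ x ∈ IsLocalRing.maximalIdeal R,
      ∃ y ∈ IsLocalRing.maximalIdeal R, (1 + y) ^ 2 = 1 + x) :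
    ((∀ a : A, a - star a ∈ nonunits A) →
      (¬ ∀ r : R, IsUnit r → ∃ a : A, IsUnit a ∧ a * star a = algebraMap R A r) ∧
      (∀ a : A, ∃ r : R, a - algebraMap R A r ∈ nonunits A)) ∧
    ((¬ ∀ a : A, a - star a ∈ nonunits A) →
      (∀ a b : A, a * b - b * a ∈ nonunits A) ∧
      (∀ r : R, IsUnit r → ∃ a : A, IsUnit a ∧ a * star a = algebraMap R A r) ∧
      (∃ θ : A, (¬ ∃ r : R, θ - algebraMap R A r ∈ nonunits A) ∧
        ∀ a : A, ∃ r s : R,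
          a - (algebraMap R A r + algebraMap R A s * θ) ∈ nonunits A)) :=
  stmt_6_general h2 R hinj hfix hodd hsq
end

section
/- In particular, the division ring A/r is always commutative (under the standing hypotheses). -/
open MulOpposite

/-! Every `a : A` satisfies `a * a = (a + star a) * a - star a * a`, where `a + star a` and
`star a * a` are fixed by `star`, hence lie in the image of `R`. Since the inverse of a fixed unit
is fixed, `R → A` is a local homomorphism, so the finite field `k = R / 𝔪` embeds centrally in
the residue division ring `D = A / 𝔯`, and every element of `D` is quadratic over `k`.
For `x y : D` the `k`-span of `1, x, y, x * y` is then closed under multiplication (`y * x` is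
read off from `(x + y) ^ 2`), so it is a finite domain, hence a field by Wedderburn's little
theorem, and `x * y = y * x`. -/

open Submodule

section SpanMul

variable {K D : Type*} [CommSemiring K] [Semiring D] [Algebra K D]

theorem Submodule.mul_mul_le_of_mul_self_le {M N : Submodule K D} (hM : M * M ≤ M)
    (hN : N * N ≤ N) (hNM : N * M ≤ M * N) : M * N * (M * N) ≤ M * N :=
  calc M * N * (M * N) = M * (N * M) * N := by simp only [mul_assoc]
    _ ≤ M * (M * N) * N := by gcongr
    _ = M * M * (N * N) := by simp only [mul_assoc]
    _ ≤ M * N := by gcongr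

theorem Submodule.span_one_pair_mul_self_le {x : D} (hx : x * x ∈ span K {1, x}) :
    span K {1, x} * span K {1, x} ≤ span K {1, x} := by
  have h1 : (1 : D) ∈ span K {1, x} := subset_span (by simp)
  have hx1 : x ∈ span K {1, x} := subset_span (by simp)
  rw [span_mul_span, span_le]
  rintro _ ⟨a, ha, b, hb, rfl⟩
  simp only [Set.mem_insert_iff, Set.mem_singleton_iff] at ha hb
  rcases ha with rfl | rfl <;> rcases hb with rfl | rfl <;> simpa

end SpanMul

theorem mul_comm_of_forall_mul_self_mem_span {K D : Type*} [CommRing K] [Finite K] [Ring D]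
    [IsDomain D] [Algebra K D] (h : ∀ z : D, z * z ∈ span K {1, z}) (x y : D) :
    x * y = y * x := by
  set P := span K {1, x} * span K {1, y}
  have h1x : (1 : D) ∈ span K {1, x} := subset_span (by simp)
  have hxx : x ∈ span K {1, x} := subset_span (by simp)
  have h1y : (1 : D) ∈ span K {1, y} := subset_span (by simp)
  have hyy : y ∈ span K {1, y} := subset_span (by simp)
  have h1P : (1 : D) ∈ P := by simpa using mul_mem_mul h1x h1y
  have hxP : x ∈ P := by simpa using mul_mem_mul hxx h1y
  have hyP : y ∈ P := by simpa using mul_mem_mul h1x hyy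
  have hsqP : ∀ z ∈ P, z * z ∈ P := fun z hz ↦
    span_le.mpr (by simp [Set.insert_subset_iff, h1P, hz]) (h z)
  have hyxP : y * x ∈ P := by
    rw [show y * x = (x + y) * (x + y) - x * x - y * y - x * y by noncomm_ring]
    exact sub_mem (sub_mem (sub_mem (hsqP _ (add_mem hxP hyP)) (hsqP _ hxP)) (hsqP _ hyP))
      (mul_mem_mul hxx hyy)
  have hYX : span K {1, y} * span K {1, x} ≤ P := by
    rw [span_mul_span, span_le]
    rintro _ ⟨a, ha, b, hb, rfl⟩
    simp only [Set.mem_insert_iff, Set.mem_singleton_iff] at ha hb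
    rcases ha with rfl | rfl <;> rcases hb with rfl | rfl <;> simpa
  have hPP : P * P ≤ P := mul_mul_le_of_mul_self_le (span_one_pair_mul_self_le (h x))
    (span_one_pair_mul_self_le (h y)) hYX
  let S : Subalgebra K D := P.toSubalgebra h1P fun a b ha hb ↦ hPP (mul_mem_mul ha hb)
  have : Module.Finite K P := Module.Finite.iff_fg.mpr
    ((fg_span (Set.toFinite _)).mul (fg_span (Set.toFinite _)))
  have : Finite S := Module.finite_of_finite K (M := P)
  exact congrArg Subtype.val ((Finite.isDomain_to_isField S).mul_comm ⟨x, hxP⟩ ⟨y, hyP⟩)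

namespace IsLocalRing

variable {A : Type*} [Ring A] [IsLocalRing A]

theorem eq_zero_or_eq_one_of_isIdempotentElem {e : A} (he : IsIdempotentElem e) :
    e = 0 ∨ e = 1 := by
  rcases isUnit_or_isUnit_of_add_one (add_sub_cancel e 1) with hu | hu
  · exact .inr (hu.mul_left_cancel (he.trans (mul_one e).symm))
  · exact .inl (hu.mul_left_cancel (by rw [sub_mul, one_mul, he.eq, sub_self, mul_zero]))

instance inst_s7 : IsDedekindFiniteMonoid A where
  mul_eq_one_symm {a b} hab := by
    have hidem : IsIdempotentElem (b * a) := by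
      rw [IsIdempotentElem, mul_assoc, ← mul_assoc a, hab, one_mul]
    refine (eq_zero_or_eq_one_of_isIdempotentElem hidem).resolve_left fun hzero ↦ ?_
    have : (1 : A) = 0 :=
      calc (1 : A) = a * (b * a) * b := by rw [← mul_assoc, hab, one_mul, hab]
        _ = 0 := by rw [hzero, mul_zero, zero_mul]
    exact one_ne_zero this

variable (A) in
def nonunitsTwoSidedIdeal : TwoSidedIdeal A :=
  .mk' (nonunits A) (zero_mem_nonunits.mpr zero_ne_one) nonunits_add
    (fun ha h ↦ ha (by simpa using h.neg)) (fun hb h ↦ hb (isUnit_of_mul_isUnit_right h))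
    (fun ha h ↦ ha (isUnit_of_mul_isUnit_left h))

variable (A) in
abbrev ResidueDivisionRing : Type _ := (nonunitsTwoSidedIdeal A).ringCon.Quotient

variable (A) in
abbrev residueDivisionRing : A →+* ResidueDivisionRing A := (nonunitsTwoSidedIdeal A).ringCon.mk'

theorem residueDivisionRing_eq_iff {a b : A} :
    residueDivisionRing A a = residueDivisionRing A b ↔ a - b ∈ nonunits A :=
  (RingCon.eq _).trans ((TwoSidedIdeal.rel_iff _ _ _).trans (TwoSidedIdeal.mem_mk' ..))

theorem residueDivisionRing_eq_zero_iff {a : A} :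
    residueDivisionRing A a = 0 ↔ a ∈ nonunits A := by
  rw [← map_zero (residueDivisionRing A), residueDivisionRing_eq_iff, sub_zero]

theorem residueDivisionRing_surjective : Function.Surjective (residueDivisionRing A) :=
  RingCon.mk'_surjective _

instance : IsDomain (ResidueDivisionRing A) := by
  have : Nontrivial (ResidueDivisionRing A) :=
    ⟨1, 0, fun h ↦ residueDivisionRing_eq_zero_iff.mp (map_one (residueDivisionRing A) ▸ h)
      isUnit_one⟩
  have : NoZeroDivisors (ResidueDivisionRing A) := by
    refine ⟨fun {x y} hxy ↦ ?_⟩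
    obtain ⟨a, rfl⟩ := residueDivisionRing_surjective x
    obtain ⟨b, rfl⟩ := residueDivisionRing_surjective y
    rw [← map_mul, residueDivisionRing_eq_zero_iff] at hxy
    simp only [residueDivisionRing_eq_zero_iff, mem_nonunits_iff]
    by_contra! h
    exact hxy (h.1.mul h.2)
  exact NoZeroDivisors.to_isDomain _

theorem mul_sub_mul_mem_nonunits_of_forall_mul_self_mem_span {R : Type*} [CommRing R]
    [IsLocalRing R] [Algebra R A] [IsLocalHom (algebraMap R A)] [Finite (ResidueField R)]
    (hquad : ∀ a : A, a * a ∈ span R {1, a}) (a b : A) : a * b - b * a ∈ nonunits A := by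
  let π := residueDivisionRing A
  let ψ : ResidueField R →+* ResidueDivisionRing A :=
    Ideal.Quotient.lift (maximalIdeal R) (π.comp (algebraMap R A)) fun r hr ↦
      residueDivisionRing_eq_zero_iff.mpr ((map_mem_nonunits_iff _ r).mpr hr)
  have hψ (r : R) : ψ (residue R r) = π (algebraMap R A r) := Ideal.Quotient.lift_mk ..
  let _ : Algebra (ResidueField R) (ResidueDivisionRing A) := ψ.toAlgebra' fun k x ↦ by
    obtain ⟨r, rfl⟩ := residue_surjective k
    obtain ⟨a, rfl⟩ := residueDivisionRing_surjective x
    rw [hψ, ← map_mul, ← map_mul, Algebra.commutes]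
  have hquad' (x : ResidueDivisionRing A) : x * x ∈ span (ResidueField R) {1, x} := by
    obtain ⟨a, rfl⟩ := residueDivisionRing_surjective x
    obtain ⟨s, t, hst⟩ := mem_span_pair.mp (hquad a)
    refine mem_span_pair.mpr ⟨residue R s, residue R t, ?_⟩
    rw [Algebra.smul_def, Algebra.smul_def] at hst ⊢
    change ψ _ * 1 + ψ _ * π a = π (a * a)
    rw [hψ, hψ, ← hst, map_add, map_mul, map_mul, map_one]
  rw [← residueDivisionRing_eq_iff, map_mul, map_mul]
  exact mul_comm_of_forall_mul_self_mem_span hquad' _ _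

end IsLocalRing

section Star

variable {R A : Type*} [CommRing R] [Ring A] [StarRing A] [Algebra R A]

theorem isLocalHom_algebraMap_of_star_eq_self_iff [IsLocalRing R] [Nontrivial A]
    (hfix : ∀ a : A, star a = a ↔ a ∈ Set.range (algebraMap R A)) :
    IsLocalHom (algebraMap R A) := by
  refine ⟨fun r hr ↦ ?_⟩
  obtain ⟨r', hr'⟩ := (hfix _).mp <| by
    rw [← Ring.inverse_star, (hfix _).mpr ⟨r, rfl⟩]
  have hrr' : algebraMap R A (r * r') = 1 := by
    rw [map_mul, hr', Ring.mul_inverse_cancel _ hr]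
  rcases IsLocalRing.isUnit_or_isUnit_one_sub_self (r * r') with h | h
  · exact isUnit_of_mul_isUnit_left h
  · simpa [hrr'] using h.map (algebraMap R A)

theorem mul_self_mem_span_of_star_eq_self_iff
    (hfix : ∀ a : A, star a = a ↔ a ∈ Set.range (algebraMap R A)) (a : A) :
    a * a ∈ span R {1, a} := by
  obtain ⟨n, hn⟩ := (hfix (star a * a)).mp (by rw [star_mul, star_star])
  obtain ⟨s, hs⟩ := (hfix (a + star a)).mp (by rw [star_add, star_star, add_comm])
  refine mem_span_pair.mpr ⟨-n, s, ?_⟩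
  rw [Algebra.smul_def, Algebra.smul_def, mul_one, map_neg, hn, hs]
  noncomm_ring

end Star

theorem stmt_7_general {A : Type*} [Ring A] [StarRing A] [IsLocalRing A]
    (R : Type*) [CommRing R] [IsLocalRing R] [Algebra R A]
    (hfix : ∀ a : A, star a = a ↔ a ∈ Set.range (algebraMap R A))
    [Finite (IsLocalRing.ResidueField R)] :
    ∀ a b : A, a * b - b * a ∈ nonunits A :=
  have := isLocalHom_algebraMap_of_star_eq_self_iff hfix
  IsLocalRing.mul_sub_mul_mem_nonunits_of_forall_mul_self_mem_span
    (mul_self_mem_span_of_star_eq_self_iff hfix)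

/-- The division ring `A/𝔯` is always commutative under the standing hypotheses,
expressed here as: every commutator lies in the Jacobson radical `𝔯 = nonunits A`. -/
theorem stmt_7 {A : Type*} [Ring A] [StarRing A] [IsLocalRing A]
    (hcent : ∀ a : A, star a = a → a ∈ Set.center A)
    (h2 : IsUnit (2 : A))
    (R : Type*) [CommRing R] [IsLocalRing R] [Algebra R A]
    (hinj : Function.Injective (algebraMap R A))
    (hfix : ∀ a : A, star a = a ↔ a ∈ Set.range (algebraMap R A))
    [Finite (IsLocalRing.ResidueField R)]
    (hodd : Odd (Nat.card (IsLocalRing.ResidueField R)))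
    (hsq : ∀ x ∈ IsLocalRing.maximalIdeal R,
      ∃ y ∈ IsLocalRing.maximalIdeal R, (1 + y) ^ 2 = 1 + x) :
    ∀ a b : A, a * b - b * a ∈ nonunits A :=
  stmt_7_general R hfix
end

section
/- If m > 2, then for every s ∈ R (including non-units) there exists a primitive vector v ∈ V with h(v,v) = s; in particular h is isotropic. -/
/-!
Because `A` is local and `h` is nondegenerate, some basis vector pairs with a given one to a
unit; combining the two (using that `2` is a unit) gives a vector of unit length, which splits
off orthogonally. Repeating this yields a basis that is orthogonal with unit lengths, and these
lengths lie in `R`. Over the residue field, a finite field of odd order, every binary form with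
unit coefficients represents every element, and the square roots on `1 + 𝔪` lift this to
`d₀x² + d₁y² + d₂z² = s` with `x` a unit. The vector `x e₀ + y e₁ + z e₂` then has length `s`,
and it is primitive because its `e₀`-coordinate is a unit.
-/

open MulOpposite

namespace HermitianForm

variable {A V : Type*} [Ring A] [StarRing A] [AddCommGroup V] [Module Aᵐᵒᵖ V]
  (h : HermitianForm A V)

lemma isSelfAdjoint_apply_self (u : V) : IsSelfAdjoint (h.toFun u u) :=
  (h.conj_symm u u).symm

def toLinearMap (u : V) : V →ₗ[Aᵐᵒᵖ] A where
  toFun := h.toFun u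
  map_add' := h.add_right u
  map_smul' a v := by
    rw [← op_unop a, h.smul_right]
    rfl

lemma sum_right {ι : Type*} (s : Finset ι) (f : ι → V) (u : V) :
    h.toFun u (∑ i ∈ s, f i) = ∑ i ∈ s, h.toFun u (f i) :=
  map_sum (h.toLinearMap u) f s

lemma sum_left {ι : Type*} (s : Finset ι) (f : ι → V) (u : V) :
    h.toFun (∑ i ∈ s, f i) u = ∑ i ∈ s, h.toFun (f i) u := by
  rw [h.conj_symm, sum_right, star_sum]
  simp only [← h.conj_symm]

lemma apply_sum_smul_self {ι : Type*} [Fintype ι] {f : ι → V}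
    (hf : Pairwise fun i j => h.toFun (f i) (f j) = 0) (a : ι → A) :
    h.toFun (∑ i, op (a i) • f i) (∑ i, op (a i) • f i) =
      ∑ i, star (a i) * h.toFun (f i) (f i) * a i := by
  rw [h.sum_left]
  refine Finset.sum_congr rfl fun i _ => ?_
  rw [h.smul_left, h.sum_right, Finset.sum_eq_single i, h.smul_right, mul_assoc]
  · intro j _ hji
    rw [h.smul_right, hf hji.symm, zero_mul]
  · simp

end HermitianForm

namespace Module.Basis

variable {ι R M : Type*} [Ring R] [AddCommGroup M] [Module R M] (c : Basis ι R M)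

lemma exists_eq_update_of_isUnit_coord [DecidableEq ι] (i : ι) {f : M}
    (hf : IsUnit (c.coord i f)) : ∃ c' : Basis ι R M, ⇑c' = Function.update c i f := by
  have hu : IsUnit (1 + c.coord i (f - c i)) := by simpa using hf
  refine ⟨c.map (LinearEquiv.dilatransvection hu), funext fun j => ?_⟩
  rcases eq_or_ne j i with rfl | hj
  · simp [LinearEquiv.dilatransvection.apply]
  · simp [LinearEquiv.dilatransvection.apply, hj]

lemma exists_eq_add_smul [DecidableEq ι] (k : ι) (α : ι → R) :
    ∃ c' : Basis ι R M, c' k = c k ∧ ∀ j, j ≠ k → c' j = c j + α j • c k := by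
  set φ := c.constr ℕ (Function.update α k 0)
  have hφ : φ (c k) = 0 := by simp [φ]
  refine ⟨c.map (LinearEquiv.transvection hφ), ?_, fun j hj => ?_⟩
  · simp [LinearMap.transvection.apply, hφ]
  · simp [LinearMap.transvection.apply, φ, hj]

end Module.Basis

namespace IsLocalRing

variable {A : Type*} [Ring A] [IsLocalRing A]

instance toIsDedekindFiniteMonoid : IsDedekindFiniteMonoid A where
  mul_eq_one_symm {a b} hab := by
    have hidem : b * a * (b * a) = b * a := by rw [mul_assoc, ← mul_assoc a, hab, one_mul]
    rcases isUnit_or_isUnit_of_add_one (add_sub_cancel (b * a) 1) with hu | hu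
    · exact hu.mul_left_cancel (hidem.trans (mul_one _).symm)
    · have hba : b * a = 0 :=
        hu.mul_left_cancel (by rw [sub_mul, one_mul, hidem, sub_self, mul_zero])
      have : (1 : A) = 0 := by
        calc (1 : A) = a * (b * a) * b := by rw [← mul_assoc, hab, one_mul, hab]
          _ = 0 := by rw [hba, mul_zero, zero_mul]
      exact absurd this one_ne_zero

lemma isUnit_add_of_not_isUnit {a x : A} (ha : IsUnit a) (hx : ¬IsUnit x) : IsUnit (a + x) := by
  by_contra hax
  exact nonunits_add hax (show -x ∈ nonunits A by simpa using hx) (by simpa using ha)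

end IsLocalRing

namespace HermitianForm

variable {A V : Type*} [Ring A] [StarRing A] [AddCommGroup V] [Module Aᵐᵒᵖ V]
  (h : HermitianForm A V) {ι : Type*}

def IsUnitDiagonalAt (c : Module.Basis ι Aᵐᵒᵖ V) (i : ι) : Prop :=
  IsUnit (h.toFun (c i) (c i)) ∧ ∀ j, j ≠ i → h.toFun (c i) (c j) = 0

lemma exists_isUnitDiagonalAt_insert [DecidableEq ι] (c : Module.Basis ι Aᵐᵒᵖ V) {K : Finset ι}
    (hK : ∀ i ∈ K, h.IsUnitDiagonalAt c i) {j : ι} (hj : j ∉ K) {e : V}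
    (hcoord : IsUnit (c.coord j e)) (he : IsUnit (h.toFun e e))
    (horth : ∀ i ∈ K, h.toFun (c i) e = 0) :
    ∃ c' : Module.Basis ι Aᵐᵒᵖ V, ∀ i ∈ insert j K, h.IsUnitDiagonalAt c' i := by
  obtain ⟨c₁, hc₁⟩ := c.exists_eq_update_of_isUnit_coord j hcoord
  obtain ⟨w, hw⟩ := he
  obtain ⟨c₂, hc₂j, hc₂⟩ := c₁.exists_eq_add_smul j
    fun l => op (-(↑w⁻¹ * h.toFun e (c₁ l)))
  have hc₁j : c₁ j = e := by rw [hc₁, Function.update_self]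
  rw [hc₁j] at hc₂
  have hc₁K : ∀ i ∈ K, c₁ i = c i := fun i hi => by rw [hc₁, Function.update_of_ne (by grind)]
  have hc₂K : ∀ i ∈ K, c₂ i = c i := fun i hi => by
    rw [hc₂ i (by grind), hc₁K i hi, h.conj_symm, horth i hi]
    simp
  have hej : c₂ j = e := hc₂j.trans hc₁j
  have he_orth : ∀ l, l ≠ j → h.toFun e (c₂ l) = 0 := fun l hl => by
    rw [hc₂ l hl, h.add_right, h.smul_right, ← hw, mul_neg, ← mul_assoc, Units.mul_inv,
      one_mul, add_neg_cancel]
  refine ⟨c₂, fun i hi => ?_⟩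
  rcases Finset.mem_insert.mp hi with rfl | hiK
  · exact ⟨hej ▸ ⟨w, hw⟩, fun l hl => hej ▸ he_orth l hl⟩
  refine ⟨hc₂K i hiK ▸ (hK i hiK).1, fun l hl => ?_⟩
  rcases eq_or_ne l j with rfl | hlj
  · rw [hej, hc₂K i hiK, horth i hiK]
  · rw [hc₂K i hiK, hc₂ l hlj, h.add_right, h.smul_right, horth i hiK, zero_mul, add_zero, hc₁,
      Function.update_of_ne hlj, (hK i hiK).2 l hl]

variable [IsLocalRing A] [Fintype ι]

lemma exists_isUnit_apply_basis (hnd : h.Nondeg) (c : Module.Basis ι Aᵐᵒᵖ V) (k : ι) :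
    ∃ j, IsUnit (h.toFun (c k) (c j)) := by
  obtain ⟨u, hu, -⟩ := hnd
    { toFun := fun v => unop (c.coord k v)
      map_add' := by simp
      map_smul' := by simp [MulOpposite.smul_eq_mul_unop] }
  have hku : h.toFun (c k) u = 1 := by
    rw [h.conj_symm, hu]
    simp
  rw [← c.sum_repr u, h.sum_right] at hku
  obtain ⟨j, -, hj⟩ := IsLocalRing.exists_of_isUnit_sum (hku ▸ isUnit_one)
  rw [← op_unop (c.repr u j), h.smul_right] at hj
  exact ⟨j, isUnit_of_mul_isUnit_left hj⟩

lemma exists_isUnit_apply_self_orthogonal (hnd : h.Nondeg) (h2 : IsUnit (2 : A))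
    (c : Module.Basis ι Aᵐᵒᵖ V) {K : Finset ι} (hK : ∀ i ∈ K, h.IsUnitDiagonalAt c i)
    {k : ι} (hk : k ∉ K) :
    ∃ j ∉ K, ∃ e : V, IsUnit (c.coord j e) ∧ IsUnit (h.toFun e e) ∧
      ∀ i ∈ K, h.toFun (c i) e = 0 := by
  have hKk : ∀ i ∈ K, h.toFun (c i) (c k) = 0 := fun i hi => (hK i hi).2 k (by grind)
  obtain ⟨j, hj⟩ := h.exists_isUnit_apply_basis hnd c k
  have hjK : j ∉ K := fun hjK => by
    rw [h.conj_symm, (hK j hjK).2 k (by grind), star_zero] at hj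
    exact not_isUnit_zero hj
  by_cases hkk : IsUnit (h.toFun (c k) (c k))
  · exact ⟨k, hk, c k, by simp, hkk, hKk⟩
  by_cases hjj : IsUnit (h.toFun (c j) (c j))
  · exact ⟨j, hjK, c j, by simp, hjj, fun i hi => (hK i hi).2 j (by grind)⟩
  have hjk : j ≠ k := by rintro rfl; exact hkk hj
  -- with `a = (h (c k) (c j))⁻¹` both cross terms of `h e e` are `1`, so `h e e = 2 + nonunit`
  obtain ⟨w, hw⟩ := hj
  set a : A := ↑w⁻¹
  have hcross : h.toFun (c k) (c j) * a = 1 := by rw [← hw, Units.mul_inv]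
  have hcross' : star a * h.toFun (c j) (c k) = 1 := by
    rw [h.conj_symm (c k), ← star_mul, hcross, star_one]
  refine ⟨k, hk, c k + op a • c j, by simp [hjk], ?_, fun i hi => ?_⟩
  · have hexp : h.toFun (c k + op a • c j) (c k + op a • c j) =
        2 + (h.toFun (c k) (c k) + star a * h.toFun (c j) (c j) * a) := by
      rw [h.add_left, h.add_right, h.add_right, h.smul_left, h.smul_left, h.smul_right,
        h.smul_right, hcross, ← mul_assoc, hcross', one_add_one_eq_two.symm]
      abel
    rw [hexp]
    refine IsLocalRing.isUnit_add_of_not_isUnit h2 fun hu => ?_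
    rcases IsLocalRing.isUnit_or_isUnit_of_isUnit_add hu with hu | hu
    · exact hkk hu
    · exact hjj (isUnit_of_mul_isUnit_left (isUnit_of_mul_isUnit_right
        (by rwa [mul_assoc] at hu)))
  · rw [h.add_right, h.smul_right, hKk i hi, (hK i hi).2 j (by grind), zero_mul, add_zero]

lemma exists_basis_isUnitDiagonalAt (hnd : h.Nondeg) (h2 : IsUnit (2 : A))
    (b : Module.Basis ι Aᵐᵒᵖ V) :
    ∃ c : Module.Basis ι Aᵐᵒᵖ V, ∀ i, h.IsUnitDiagonalAt c i := by
  classical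
  suffices ∀ n ≤ Fintype.card ι, ∃ (c : Module.Basis ι Aᵐᵒᵖ V) (K : Finset ι),
      K.card = n ∧ ∀ i ∈ K, h.IsUnitDiagonalAt c i by
    obtain ⟨c, K, hK, hc⟩ := this _ le_rfl
    exact ⟨c, fun i => hc i (by simp [Finset.eq_univ_of_card K hK])⟩
  intro n
  induction n with
  | zero => exact fun _ => ⟨b, ∅, rfl, by simp⟩
  | succ n ih =>
    intro hn
    obtain ⟨c, K, rfl, hK⟩ := ih (by omega)
    obtain ⟨k, -, hk⟩ := Finset.exists_mem_notMem_of_card_lt_card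
      (show K.card < (Finset.univ : Finset ι).card by simpa using hn)
    obtain ⟨j, hj, e, hcoord, he, horth⟩ :=
      h.exists_isUnit_apply_self_orthogonal hnd h2 c hK hk
    obtain ⟨c', hc'⟩ := h.exists_isUnitDiagonalAt_insert c hK hj hcoord he horth
    exact ⟨c', insert j K, Finset.card_insert_of_notMem hj, hc'⟩

end HermitianForm

lemma FiniteField.exists_mul_sq_add_mul_sq_eq_s13 {K : Type*} [Field K] [Fintype K]
    (hK : Fintype.card K % 2 = 1) {b c : K} (hb : b ≠ 0) (hc : c ≠ 0) (t : K) :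
    ∃ y z : K, b * y ^ 2 + c * z ^ 2 = t := by
  open Polynomial in
  obtain ⟨y, z, hyz⟩ := FiniteField.exists_root_sum_quadratic
    (f := C b * X ^ 2 + C 0 * X + C (-t)) (g := C c * X ^ 2 + C 0 * X + C 0)
    (degree_quadratic hb) (degree_quadratic hc) hK
  refine ⟨y, z, ?_⟩
  simp only [eval_add, eval_mul, eval_pow, eval_C, eval_X, zero_mul, add_zero] at hyz
  linear_combination hyz

namespace IsLocalRing

variable {R : Type*} [CommRing R] [IsLocalRing R]

lemma exists_sum_mul_sq_eq_of_isUnit [Finite (ResidueField R)]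
    (hodd : Odd (Nat.card (ResidueField R)))
    (hsq : ∀ x ∈ maximalIdeal R, ∃ y ∈ maximalIdeal R, (1 + y) ^ 2 = 1 + x)
    {d : Fin 3 → R} (hd : ∀ t, IsUnit (d t)) (s : R) :
    ∃ x : Fin 3 → R, IsUnit (x 0) ∧ ∑ t, d t * x t ^ 2 = s := by
  have := Fintype.ofFinite (ResidueField R)
  obtain ⟨y', z', hyz'⟩ := FiniteField.exists_mul_sq_add_mul_sq_eq_s13
    (by rw [← Nat.card_eq_fintype_card]; exact Nat.odd_iff.mp hodd)
    ((hd 1).map (residue R)).ne_zero ((hd 2).map (residue R)).ne_zero (residue R (s - d 0))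
  obtain ⟨y, rfl⟩ := residue_surjective y'
  obtain ⟨z, rfl⟩ := residue_surjective z'
  -- `ε := s - d 0 - d 1 * y ^ 2 - d 2 * z ^ 2` lies in `𝔪`,
  -- and `x := √(1 + ε / d 0)` satisfies `d 0 * x ^ 2 = d 0 + ε`
  have hε : s - d 0 - d 1 * y ^ 2 - d 2 * z ^ 2 ∈ maximalIdeal R := by
    rw [← Ideal.Quotient.eq_zero_iff_mem]
    change residue R _ = 0
    simp only [map_sub, map_mul, map_pow] at hyz' ⊢
    linear_combination -hyz'
  obtain ⟨u, hu⟩ := hd 0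
  have hu_inv : d 0 * ↑u⁻¹ = 1 := by rw [← hu, Units.mul_inv]
  obtain ⟨w, hw, hw2⟩ := hsq _ (Ideal.mul_mem_left _ (↑u⁻¹) hε)
  refine ⟨![1 + w, y, z], isUnit_add_of_not_isUnit isUnit_one ((mem_maximalIdeal w).mp hw), ?_⟩
  simp only [Fin.sum_univ_three, Matrix.cons_val_zero, Matrix.cons_val_one, Matrix.cons_val_two,
    Matrix.head_cons, Matrix.tail_cons]
  rw [hw2]
  linear_combination (s - d 0 - d 1 * y ^ 2 - d 2 * z ^ 2) * hu_inv

end IsLocalRing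

lemma isUnit_of_isUnit_algebraMap_of_range_eq_fixed {R A : Type*} [CommRing R] [Ring A]
    [StarRing A] [Algebra R A] (hinj : Function.Injective (algebraMap R A))
    (hfix : ∀ a : A, star a = a ↔ a ∈ Set.range (algebraMap R A)) {r : R}
    (hr : IsUnit (algebraMap R A r)) : IsUnit r := by
  obtain ⟨u, hu⟩ := hr
  have hu_star : star u = u := Units.ext <| by rw [Units.coe_star, hu, (hfix _).2 ⟨r, rfl⟩]
  obtain ⟨r', hr'⟩ := (hfix _).1 (show star (↑u⁻¹ : A) = ↑u⁻¹ by
    rw [← Units.coe_star_inv, hu_star])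
  exact .of_mul_eq_one r' (hinj (by rw [map_mul, hr', ← hu, Units.mul_inv, map_one]))

theorem stmt_13_general {A V : Type*} [Ring A] [StarRing A] [IsLocalRing A]
    [AddCommGroup V] [Module Aᵐᵒᵖ V]
    (h2 : IsUnit (2 : A))
    (R : Type*) [CommRing R] [IsLocalRing R] [Algebra R A]
    (hinj : Function.Injective (algebraMap R A))
    (hfix : ∀ a : A, star a = a ↔ a ∈ Set.range (algebraMap R A))
    [Finite (IsLocalRing.ResidueField R)]
    (hodd : Odd (Nat.card (IsLocalRing.ResidueField R)))
    (hsq : ∀ x ∈ IsLocalRing.maximalIdeal R,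
      ∃ y ∈ IsLocalRing.maximalIdeal R, (1 + y) ^ 2 = 1 + x)
    (m : ℕ) (hm : 2 < m) (b : Module.Basis (Fin m) Aᵐᵒᵖ V)
    (h : HermitianForm A V) (hnd : h.Nondeg) :
    (∀ s : R, ∃ v : V, IsPrimitive A m v ∧ h.toFun v v = algebraMap R A s) ∧
    (∃ v : V, IsPrimitive A m v ∧ h.toFun v v = 0) := by
  have represent (s : R) : ∃ v : V, IsPrimitive A m v ∧ h.toFun v v = algebraMap R A s := by
    obtain ⟨c, hc⟩ := h.exists_basis_isUnitDiagonalAt hnd h2 b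
    let e : Fin 3 ↪ Fin m := Fin.castLEEmb hm
    choose d hd using fun t => (hfix _).1 (h.isSelfAdjoint_apply_self (c (e t)))
    obtain ⟨x, hx0, hx⟩ := IsLocalRing.exists_sum_mul_sq_eq_of_isUnit hodd hsq
      (fun t => isUnit_of_isUnit_algebraMap_of_range_eq_fixed hinj hfix ((hd t).symm ▸ (hc _).1))
      s
    set v := ∑ t, op (algebraMap R A (x t)) • c (e t)
    have hcoord : c.coord (e 0) v = op (algebraMap R A (x 0)) := by
      simp [v, map_sum, Finsupp.single_apply, e.injective.eq_iff]
    obtain ⟨c', hc'⟩ := c.exists_eq_update_of_isUnit_coord (e 0) (hcoord ▸ (hx0.map _).op)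
    refine ⟨v, ⟨c', e 0, by simp [hc']⟩, ?_⟩
    rw [h.apply_sum_smul_self (fun t t' htt' => (hc (e t)).2 (e t') (e.injective.ne htt'.symm)),
      ← hx, map_sum]
    refine Finset.sum_congr rfl fun t _ => ?_
    rw [(hfix _).2 ⟨x t, rfl⟩, ← hd, ← map_mul, ← map_mul]
    ring_nf
  exact ⟨represent, by simpa using represent 0⟩

/-- Lemma 3.8(c): if `m > 2` then every element of the fixed ring `R` (unit or not)
is the length of a primitive vector; in particular `h` is isotropic. -/
theorem stmt_13 {A V : Type*} [Ring A] [StarRing A] [IsLocalRing A]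
    [AddCommGroup V] [Module Aᵐᵒᵖ V]
    (hcent : ∀ a : A, star a = a → a ∈ Set.center A)
    (h2 : IsUnit (2 : A))
    (R : Type*) [CommRing R] [IsLocalRing R] [Algebra R A]
    (hinj : Function.Injective (algebraMap R A))
    (hfix : ∀ a : A, star a = a ↔ a ∈ Set.range (algebraMap R A))
    [Finite (IsLocalRing.ResidueField R)]
    (hodd : Odd (Nat.card (IsLocalRing.ResidueField R)))
    (hsq : ∀ x ∈ IsLocalRing.maximalIdeal R,
      ∃ y ∈ IsLocalRing.maximalIdeal R, (1 + y) ^ 2 = 1 + x)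
    (m : ℕ) (hm : 2 < m) (b : Module.Basis (Fin m) Aᵐᵒᵖ V)
    (h : HermitianForm A V) (hnd : h.Nondeg) :
    (∀ s : R, ∃ v : V, IsPrimitive A m v ∧ h.toFun v v = algebraMap R A s) ∧
    (∃ v : V, IsPrimitive A m v ∧ h.toFun v v = 0) :=
  stmt_13_general h2 R hinj hfix hodd hsq m hm b h hnd
end
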